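/- arXiv:2107.08540 — 5 statements merged into one kernel-verified Lean document; each statement's English description precedes it below -/
import Mathlib

section
/- Every finite potential game has at least one Nash equilibrium. -/
/-- Every finite potential game has at least one Nash equilibrium. -/
theorem stmt_4 {ι : Type*} [Fintype ι] [DecidableEq ι] {A : ι → Type*}
    [∀ i, Fintype (A i)] [∀ i, Nonempty (A i)]
    (U : ι → (∀ i, A i) → ℝ) (φ : (∀ i, A i) → ℝ)
    (hpot : ∀ (i : ι) (a : ∀ j, A j) (ai' : A i),
      U i (Function.update a i ai') - U i a = φ (Function.update a i ai') - φ a) :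
    ∃ a : ∀ i, A i, ∀ (i : ι) (ai : A i), U i (Function.update a i ai) ≤ U i a := by
  obtain ⟨a, -, ha⟩ := Finset.exists_max_image Finset.univ φ ⟨Classical.arbitrary _, Finset.mem_univ _⟩
  refine ⟨a, fun i ai => ?_⟩
  have h := hpot i a ai
  have := ha _ (Finset.mem_univ (Function.update a i ai))
  linarith
end

section
/- In a finite potential game, any sequence of strict unilateral best-response improvements terminates in a Nash equilibrium after finitely many steps (there is no infinite sequence of action profiles a(0), a(1), … where each a(k+1) differs from a(k) in one player's action and strictly increases that player's utility). -/
/-- In a finite potential game there is no infinite sequence of strict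
unilateral improvement steps. -/
theorem stmt_5 {ι : Type*} [Fintype ι] [DecidableEq ι] {A : ι → Type*} [∀ i, Fintype (A i)]
    (U : ι → (∀ i, A i) → ℝ) (φ : (∀ i, A i) → ℝ)
    (hpot : ∀ (i : ι) (a : ∀ j, A j) (ai' : A i),
      U i (Function.update a i ai') - U i a = φ (Function.update a i ai') - φ a)
    (a : ℕ → ∀ i, A i)
    (himp : ∀ k : ℕ, ∃ i : ι,
      (∀ j, j ≠ i → a (k + 1) j = a k j) ∧ U i (a k) < U i (a (k + 1))) :
    False := by
  have hstep : ∀ k, φ (a k) < φ (a (k + 1)) := by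
    intro k
    obtain ⟨i, hj, hu⟩ := himp k
    have heq : a (k + 1) = Function.update (a k) i (a (k + 1) i) := by
      funext j
      by_cases h : j = i
      · subst h; simp
      · simp [Function.update_of_ne h, hj j h]
    have := hpot i (a k) (a (k + 1) i)
    rw [← heq] at this
    linarith
  have hmono : StrictMono (fun k => φ (a k)) := strictMono_nat_of_lt_succ hstep
  have hinj : Function.Injective a := fun m n hmn => by
    by_contra h
    exact absurd (congrArg φ hmn) (hmono.injective.ne h)
  exact absurd hinj (not_injective_infinite_finite a)
end

section
/- In the single-station DTE game with n robots and m simple tasks (m ≥ n), at any Nash equilibrium p*: (a) at least n tasks are completed; (b) the total value of completed tasks f(p*) satisfies f(p*) ≥ n · max over incomplete tasks of v̄_j (if any task is incomplete); and consequently (c) the price of anarchy is at most max(m/n, 1), i.e., for any two Nash equilibria p*, q*, f(q*) ≤ (m/n) · f(p*). -/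
open scoped Classical

/-- Total value of the tasks satisfying the predicate `completed`. -/
noncomputable def completedVal {tasks : Type*} [Fintype tasks]
    (v : tasks → ℝ) (completed : tasks → Prop) : ℝ :=
  ∑ j, if completed j then v j else 0

/-- Global objective: total value of tasks served by at least one robot. -/
noncomputable def globalF {ι A tasks : Type*} [Fintype tasks]
    (v : tasks → ℝ) (serves : A → tasks → Prop) (p : ι → A) : ℝ :=
  completedVal v (fun j => ∃ i, serves (p i) j)

/-- Marginal-contribution (wonderful-life) utility of robot `i`. -/
noncomputable def utilF {ι A tasks : Type*} [Fintype tasks]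
    (v : tasks → ℝ) (serves : A → tasks → Prop) (i : ι) (p : ι → A) : ℝ :=
  globalF v serves p - completedVal v (fun j => ∃ k, k ≠ i ∧ serves (p k) j)

section Helpers
variable {tasks : Type*} [Fintype tasks] (v : tasks → ℝ)

lemma cv_eq_sum (P : tasks → Prop) :
    completedVal v P = ∑ j ∈ Finset.univ.filter P, v j := by
  rw [completedVal, Finset.sum_filter]

lemma cv_mono (hv : ∀ j, 0 ≤ v j) (P Q : tasks → Prop) (h : ∀ j, P j → Q j) :
    completedVal v P ≤ completedVal v Q := by
  unfold completedVal
  apply Finset.sum_le_sum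
  intro j _
  by_cases hP : P j
  · simp [hP, h j hP]
  · simp only [hP, if_false]
    split_ifs
    exacts [hv j, le_rfl]

lemma cv_sub (P Q : tasks → Prop) (h : ∀ j, Q j → P j) :
    completedVal v P - completedVal v Q = completedVal v (fun j => P j ∧ ¬ Q j) := by
  unfold completedVal
  rw [← Finset.sum_sub_distrib]
  apply Finset.sum_congr rfl
  intro j _
  by_cases hQ : Q j
  · simp [hQ, h j hQ]
  · by_cases hP : P j <;> simp [hP, hQ]

lemma cv_single (j0 : tasks) : completedVal v (fun j => j = j0) = v j0 := by
  simp [completedVal, Finset.sum_ite_eq']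
end Helpers



/-- Single-station DTE game, `n` robots and `m ≥ n` simple tasks.
At any Nash equilibrium `p`: (a) at least `n` tasks are completed; (b) if task `j` is
incomplete then `f(p) ≥ n · v j`; (c) for any other Nash equilibrium `q`,
`f(q) ≤ (m/n) · f(p)` (price of anarchy at most `m/n`). -/
theorem stmt_7 {ι A tasks : Type*} [Fintype ι] [Fintype tasks] [DecidableEq ι] [Nonempty ι]
    (hmn : Fintype.card ι ≤ Fintype.card tasks)
    (v : tasks → ℝ) (hv : ∀ j, 0 < v j)
    (serves : A → tasks → Prop)
    (hserve : ∀ j : tasks, ∃ act : A, ∀ j', serves act j' ↔ j' = j)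
    (p : ι → A)
    (hNash : ∀ (i : ι) (act : A),
      utilF v serves i (Function.update p i act) ≤ utilF v serves i p) :
    (Fintype.card ι ≤ (Finset.univ.filter (fun j => ∃ i, serves (p i) j)).card)
    ∧ (∀ j : tasks, ¬ (∃ k, serves (p k) j) →
        (Fintype.card ι : ℝ) * v j ≤ globalF v serves p)
    ∧ (∀ q : ι → A,
        (∀ (i : ι) (act : A),
          utilF v serves i (Function.update q i act) ≤ utilF v serves i q) →
        globalF v serves q
          ≤ ((Fintype.card tasks : ℝ) / (Fintype.card ι : ℝ)) * globalF v serves p) := by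
  have hv0 : ∀ j, 0 ≤ v j := fun j => (hv j).le
  set n := Fintype.card ι with hn
  set m := Fintype.card tasks with hm
  -- essential sets
  have hEdef : ∃ E : ι → Finset tasks, ∀ i,
      E i = Finset.univ.filter
        (fun j => (∃ k, serves (p k) j) ∧ ¬ ∃ k, k ≠ i ∧ serves (p k) j) :=
    ⟨_, fun _ => rfl⟩
  obtain ⟨E, hE⟩ := hEdef
  have hutil : ∀ i, utilF v serves i p = ∑ j ∈ E i, v j := by
    intro i
    rw [utilF, globalF, cv_sub v _ _ (fun j ⟨k, _, hk⟩ => ⟨k, hk⟩), cv_eq_sum, hE]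
    exact Finset.sum_congr (by ext j; simp) (fun _ _ => rfl)
  -- deviation lemma
  have hdev : ∀ (i : ι) (j0 : tasks), ¬ (∃ k, serves (p k) j0) →
      v j0 ≤ utilF v serves i p := by
    intro i j0 hj0
    obtain ⟨act, hact⟩ := hserve j0
    have key := hNash i act
    have heq : utilF v serves i (Function.update p i act) = v j0 := by
      rw [utilF, globalF, cv_sub v _ _ (fun j ⟨k, _, hk⟩ => ⟨k, hk⟩), ← cv_single v j0]
      congr 1
      funext j
      have hupd : ∀ k, k ≠ i → Function.update p i act k = p k :=
        fun k hk => Function.update_of_ne hk _ _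
      apply propext
      constructor
      · rintro ⟨⟨k, hk⟩, hnk⟩
        by_cases hki : k = i
        · subst hki
          rw [Function.update_self] at hk
          exact (hact j).mp hk
        · exact absurd ⟨k, hki, hk⟩ hnk
      · intro hjj
        refine ⟨⟨i, ?_⟩, ?_⟩
        · rw [Function.update_self]; exact (hact j).mpr hjj
        · rintro ⟨k, hki, hk⟩
          rw [hupd k hki] at hk
          exact hj0 ⟨k, hjj ▸ hk⟩
    linarith
  -- essential sets are pairwise disjoint
  have hdisj : ∀ i ∈ (Finset.univ : Finset ι), ∀ i' ∈ (Finset.univ : Finset ι),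
      i ≠ i' → Disjoint (E i) (E i') := by
    intro i _ i' _ hii
    rw [Finset.disjoint_left]
    intro j hj hj'
    rw [hE] at hj hj'
    rw [Finset.mem_filter] at hj hj'
    obtain ⟨_, ⟨k, hk⟩, hni⟩ := hj
    obtain ⟨_, _, hni'⟩ := hj'
    by_cases hki : k = i
    · have hki' : k ≠ i' := by rw [hki]; exact hii
      exact hni' ⟨k, hki', hk⟩
    · exact hni ⟨k, hki, hk⟩
  have hEsub : ∀ i, E i ⊆ Finset.univ.filter (fun j => ∃ k, serves (p k) j) := by
    intro i j hj
    rw [hE] at hj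
    rw [Finset.mem_filter] at hj ⊢
    exact ⟨hj.1, hj.2.1⟩
  -- sum of utilities bounded by global objective
  have hsum : ∑ i, utilF v serves i p ≤ globalF v serves p := by
    calc ∑ i, utilF v serves i p = ∑ i, ∑ j ∈ E i, v j := by
          exact Finset.sum_congr rfl (fun i _ => hutil i)
      _ = ∑ j ∈ Finset.univ.biUnion E, v j := (Finset.sum_biUnion hdisj).symm
      _ ≤ ∑ j ∈ Finset.univ.filter (fun j => ∃ k, serves (p k) j), v j := by
          apply Finset.sum_le_sum_of_subset_of_nonneg
          · intro j hj
            obtain ⟨i, _, hi⟩ := Finset.mem_biUnion.mp hj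
            exact hEsub i hi
          · exact fun j _ _ => hv0 j
      _ = globalF v serves p := by
          rw [globalF, cv_eq_sum]
          exact Finset.sum_congr (by ext j; simp) (fun _ _ => rfl)
  have hFp0 : 0 ≤ globalF v serves p := by
    rw [globalF, cv_eq_sum]
    exact Finset.sum_nonneg (fun j _ => hv0 j)
  -- part (b)
  have partb : ∀ j : tasks, ¬ (∃ k, serves (p k) j) →
      (n : ℝ) * v j ≤ globalF v serves p := by
    intro j0 hj0
    have h1 : (n : ℝ) * v j0 ≤ ∑ i, utilF v serves i p := by
      calc (n : ℝ) * v j0 = ∑ _i : ι, v j0 := by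
            rw [Finset.sum_const, nsmul_eq_mul, Finset.card_univ]
        _ ≤ ∑ i, utilF v serves i p :=
            Finset.sum_le_sum (fun i _ => hdev i j0 hj0)
    linarith
  -- part (a)
  have parta : n ≤ (Finset.univ.filter (fun j => ∃ i, serves (p i) j)).card := by
    by_cases hall : ∀ j, ∃ k, serves (p k) j
    · have : Finset.univ.filter (fun j => ∃ i, serves (p i) j) = Finset.univ := by
        apply Finset.filter_true_of_mem
        exact fun j _ => hall j
      rw [this, Finset.card_univ]
      exact hmn
    · push_neg at hall
      obtain ⟨j0, hj0⟩ := hall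
      have hEne : ∀ i, (E i).Nonempty := by
        intro i
        by_contra hne
        rw [Finset.not_nonempty_iff_eq_empty] at hne
        have := hdev i j0 (by simpa using hj0)
        rw [hutil i, hne, Finset.sum_empty] at this
        exact absurd this (not_le.mpr (hv j0))
      choose g hg using hEne
      have hcard : n ≤ (Finset.univ.filter (fun j => ∃ i, serves (p i) j)).card := by
        rw [hn, ← Finset.card_univ]
        apply Finset.card_le_card_of_injOn g
        · intro i _
          exact hEsub i (hg i)
        · intro i _ i' _ hgii
          by_contra hii
          exact (Finset.disjoint_left.mp (hdisj i (Finset.mem_univ i) i'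
            (Finset.mem_univ i') hii) (hg i)) (hgii ▸ hg i')
      exact hcard
  refine ⟨parta, partb, ?_⟩
  -- part (c)
  intro q _hq
  have hnpos : (0 : ℝ) < n := by
    rw [hn]; exact_mod_cast Fintype.card_pos
  have hqle : globalF v serves q ≤ ∑ j, v j := by
    rw [globalF]
    calc completedVal v (fun j => ∃ i, serves (q i) j)
        ≤ completedVal v (fun _ => True) := cv_mono v hv0 _ _ (fun _ _ => trivial)
      _ = ∑ j, v j := by simp [completedVal]
  by_cases hall : ∀ j, ∃ k, serves (p k) j
  · have hFp : globalF v serves p = ∑ j, v j := by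
      rw [globalF]
      unfold completedVal
      apply Finset.sum_congr rfl
      intro j _
      simp [hall j]
    have hmr : (n : ℝ) ≤ m := by exact_mod_cast hmn
    rw [div_mul_eq_mul_div, le_div_iff₀ hnpos]
    nlinarith [hqle, hFp.ge, hFp.le, hFp0]
  · push_neg at hall
    set I := Finset.univ.filter (fun j => ¬ ∃ k, serves (p k) j) with hI
    have hIne : I.Nonempty := by
      obtain ⟨j0, hj0⟩ := hall
      exact ⟨j0, by simp [hI, hj0]⟩
    obtain ⟨j0, hj0I, hj0max⟩ := Finset.exists_max_image I v hIne
    have hj0in : ¬ ∃ k, serves (p k) j0 := by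
      simpa [hI] using hj0I
    have hb := partb j0 hj0in
    have hsplit : (∑ j, v j) = globalF v serves p + ∑ j ∈ I, v j := by
      rw [globalF, cv_eq_sum]
      rw [← Finset.sum_filter_add_sum_filter_not Finset.univ (fun j => ∃ k, serves (p k) j) v]
      congr 1
      all_goals exact Finset.sum_congr (by ext j; simp [hI]) (fun _ _ => rfl)
    have hIbound : (∑ j ∈ I, v j) ≤ (I.card : ℝ) * v j0 := by
      calc (∑ j ∈ I, v j) ≤ ∑ _j ∈ I, v j0 :=
            Finset.sum_le_sum (fun j hj => hj0max j hj)
        _ = (I.card : ℝ) * v j0 := by rw [Finset.sum_const, nsmul_eq_mul]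
    have hcardI : I.card + n ≤ m := by
      have h1 : (Finset.univ.filter (fun j => ∃ k, serves (p k) j)).card + I.card = m := by
        rw [hI, hm, ← Finset.card_univ]
        exact Finset.card_filter_add_card_filter_not _
      omega
    have hcardIr : (I.card : ℝ) + n ≤ m := by exact_mod_cast hcardI
    have hIcard0 : (0 : ℝ) ≤ (I.card : ℝ) := Nat.cast_nonneg _
    rw [div_mul_eq_mul_div, le_div_iff₀ hnpos]
    nlinarith [hqle, hsplit, hIbound, hb, hv j0, hFp0]
end

section
/- For every M > 0, there exists a DTE-style potential game (with marginal-contribution utilities) whose price of anarchy exceeds M. Concretely: two players each choose an action in {1, 2, 3}; task 1 and task 2 (values v̄_1, v̄_2 > 0) are completed if at least one player chooses them; task 3 (value v̄_3 > 0) is completed only if both players choose action 3; the objective is the total value of completed tasks and each utility is the player's marginal contribution. Then the profile (1,2) and the profile (3,3) are both Nash equilibria, so the price of anarchy is v̄_3/(v̄_1 + v̄_2), which is unbounded as v̄_3 → ∞. -/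
open scoped Classical

/-- Objective for the two-player three-task example: tasks `0` and `1` are completed if
some player chooses them; task `2` requires both players. -/
noncomputable def exF (v1 v2 v3 : ℝ) (a : Fin 2 → Fin 3) : ℝ :=
  (if ∃ i, a i = 0 then v1 else 0) + (if ∃ i, a i = 1 then v2 else 0) +
    (if ∀ i, a i = 2 then v3 else 0)

/-- Objective with player `i` removed: task `2` (requiring both players) can never be
completed without `i`. -/
noncomputable def exFminus (v1 v2 : ℝ) (i : Fin 2) (a : Fin 2 → Fin 3) : ℝ :=
  (if ∃ k, k ≠ i ∧ a k = 0 then v1 else 0) + (if ∃ k, k ≠ i ∧ a k = 1 then v2 else 0)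

/-- Marginal-contribution utility in the example game. -/
noncomputable def exU (v1 v2 v3 : ℝ) (i : Fin 2) (a : Fin 2 → Fin 3) : ℝ :=
  exF v1 v2 v3 a - exFminus v1 v2 i a

/-- For every `M > 0` there is a DTE-style game (the two-player,
three-task example) whose price of anarchy exceeds `M`: the profiles `(1,2)` and
`(3,3)` are both Nash equilibria, with values `v1 + v2` and `v3` respectively, and
`v3 / (v1 + v2) > M`. -/
theorem stmt_8 : ∀ M : ℝ, 0 < M → ∃ v1 v2 v3 : ℝ,
    0 < v1 ∧ 0 < v2 ∧ v1 + v2 < v3 ∧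
    (∀ (i : Fin 2) (act : Fin 3),
      exU v1 v2 v3 i (Function.update (![0, 1] : Fin 2 → Fin 3) i act)
        ≤ exU v1 v2 v3 i ![0, 1]) ∧
    (∀ (i : Fin 2) (act : Fin 3),
      exU v1 v2 v3 i (Function.update (![2, 2] : Fin 2 → Fin 3) i act)
        ≤ exU v1 v2 v3 i ![2, 2]) ∧
    exF v1 v2 v3 ![2, 2] = v3 ∧
    exF v1 v2 v3 ![0, 1] = v1 + v2 ∧
    M < v3 / (v1 + v2) := by
  intro M hM
  refine ⟨1, 1, 2*M+2, by norm_num, by norm_num, by linarith, ?_, ?_, ?_, ?_, ?_⟩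
  · intro i act
    fin_cases i <;> fin_cases act <;>
      simp [exU, exF, exFminus, Function.update, Fin.exists_fin_two, Fin.forall_fin_two,
        Matrix.cons_val_zero, Matrix.cons_val_one] <;> linarith
  · intro i act
    fin_cases i <;> fin_cases act <;>
      simp [exU, exF, exFminus, Function.update, Fin.exists_fin_two, Fin.forall_fin_two,
        Matrix.cons_val_zero, Matrix.cons_val_one] <;> linarith
  · simp [exF, Fin.exists_fin_two, Fin.forall_fin_two]
  · simp [exF, Fin.exists_fin_two, Fin.forall_fin_two]
  · rw [lt_div_iff₀ (by norm_num : (0:ℝ) < 1 + 1)]; linarith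
end

section
/- In the single-station DTE game with n robots and m simple tasks where all task values are equal (v̄_j = v for all j), every Nash equilibrium completes min(n, m) or more tasks; hence every Nash equilibrium achieves at least min(n,m)/m fraction of the maximum possible total value m·v when the optimum completes all tasks. -/
open scoped Classical

lemma completedVal_eq {tasks : Type*} [Fintype tasks] (v : ℝ) (P : tasks → Prop)
    [DecidablePred P] :
    completedVal (fun _ => v) P = ((Finset.univ.filter P).card : ℝ) * v := by
  have step : completedVal (fun _ => v) P = ∑ j, if P j then v else (0:ℝ) := by
    rw [completedVal]
    exact Finset.sum_congr rfl (fun j _ => by by_cases h : P j <;> simp [h])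
  rw [step, ← Finset.sum_filter, Finset.sum_const, nsmul_eq_mul]

/-- In the single-station DTE game with `n` robots and `m` simple tasks
of equal value `v`, every Nash equilibrium completes at least `min(n, m)` tasks, and
hence achieves at least a `min(n,m)/m` fraction of the maximum possible total value
`m · v`. -/
theorem stmt_14 {ι A tasks : Type*} [Fintype ι] [Fintype tasks] [DecidableEq ι]
    [Nonempty ι] [Nonempty tasks]
    (v : ℝ) (hv : 0 < v)
    (serves : A → tasks → Prop)
    (hserve : ∀ j : tasks, ∃ act : A, ∀ j', serves act j' ↔ j' = j)
    (p : ι → A)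
    (hNash : ∀ (i : ι) (act : A),
      utilF (fun _ => v) serves i (Function.update p i act)
        ≤ utilF (fun _ => v) serves i p) :
    min (Fintype.card ι) (Fintype.card tasks)
      ≤ (Finset.univ.filter (fun j => ∃ i, serves (p i) j)).card
    ∧ ((min (Fintype.card ι) (Fintype.card tasks) : ℝ) / (Fintype.card tasks : ℝ))
        * ((Fintype.card tasks : ℝ) * v)
      ≤ globalF (fun _ => v) serves p := by
  set C : Finset tasks := Finset.univ.filter (fun j => ∃ i, serves (p i) j) with hC
  have hm : 0 < (Fintype.card tasks : ℝ) := by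
    exact_mod_cast Fintype.card_pos
  have main : min (Fintype.card ι) (Fintype.card tasks) ≤ C.card := by
    by_cases hall : ∀ j, ∃ i, serves (p i) j
    · have : C = Finset.univ := by
        apply Finset.eq_univ_iff_forall.mpr
        intro j; simp [hC, hall j]
      rw [this, Finset.card_univ]
      exact min_le_right _ _
    · push_neg at hall
      obtain ⟨j₀, hj₀⟩ := hall
      -- every robot is essential to some completed task
      have key : ∀ i : ι, ∃ j : tasks, serves (p i) j ∧ ∀ k, k ≠ i → ¬ serves (p k) j := by
        intro i
        obtain ⟨act, hact⟩ := hserve j₀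
        have hN := hNash i act
        set O : Finset tasks := Finset.univ.filter (fun j => ∃ k, k ≠ i ∧ serves (p k) j)
          with hO
        -- compute the deviation utility: it equals v
        have hOth : ∀ j, (∃ k, k ≠ i ∧ serves (Function.update p i act k) j)
            ↔ (∃ k, k ≠ i ∧ serves (p k) j) := by
          intro j
          constructor
          · rintro ⟨k, hk, hs⟩
            rw [Function.update_of_ne hk] at hs
            exact ⟨k, hk, hs⟩
          · rintro ⟨k, hk, hs⟩
            exact ⟨k, hk, by rwa [Function.update_of_ne hk]⟩
        have hGdev : (∀ j, (∃ k, serves (Function.update p i act k) j)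
            ↔ (j = j₀ ∨ ∃ k, k ≠ i ∧ serves (p k) j)) := by
          intro j
          constructor
          · rintro ⟨k, hs⟩
            by_cases hk : k = i
            · subst hk; rw [Function.update_self] at hs
              exact Or.inl ((hact j).mp hs)
            · exact Or.inr ⟨k, hk, by rwa [Function.update_of_ne hk] at hs⟩
          · rintro (rfl | ⟨k, hk, hs⟩)
            · exact ⟨i, by rw [Function.update_self]; exact (hact j).mpr rfl⟩
            · exact ⟨k, by rwa [Function.update_of_ne hk]⟩
        have hj₀O : j₀ ∉ O := by
          simp only [hO, Finset.mem_filter]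
          rintro ⟨-, k, -, hs⟩
          exact hj₀ k hs
      -- value of deviation utility = v
        have hdev : utilF (fun _ => v) serves i (Function.update p i act) = v := by
          rw [utilF, globalF, completedVal_eq, completedVal_eq]
          have h1 : Finset.univ.filter (fun j => ∃ k, serves (Function.update p i act k) j)
              = insert j₀ O := by
            ext j
            simp only [Finset.mem_filter, Finset.mem_insert, Finset.mem_univ, true_and,
              hO, hGdev j]
          have h2 : Finset.univ.filter
              (fun j => ∃ k, k ≠ i ∧ serves (Function.update p i act k) j) = O := by
            ext j
            simp only [Finset.mem_filter, Finset.mem_univ, true_and, hO, hOth j]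
          rw [h1, h2, Finset.card_insert_of_notMem hj₀O]
          push_cast
          ring
        rw [hdev] at hN
        -- so utilF i p ≥ v, hence C.card > O.card
        have hup : utilF (fun _ => v) serves i p = ((C.card : ℝ) - O.card) * v := by
          rw [utilF, globalF, completedVal_eq, completedVal_eq]
          rw [← hC, ← hO]
          ring
        rw [hup] at hN
        have hcard : (O.card : ℝ) < C.card := by
          nlinarith
        have hcard' : O.card < C.card := by exact_mod_cast hcard
        have hsub : O ⊆ C := by
          intro j hj
          simp only [hO, Finset.mem_filter] at hj
          obtain ⟨-, k, -, hs⟩ := hj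
          simp only [hC, Finset.mem_filter, Finset.mem_univ, true_and]
          exact ⟨k, hs⟩
        have hss : O ⊂ C := Finset.ssubset_iff_subset_ne.mpr
          ⟨hsub, fun h => by rw [h] at hcard'; omega⟩
        obtain ⟨j, hjC, hjO⟩ := Finset.exists_of_ssubset hss
        simp only [hC, Finset.mem_filter, Finset.mem_univ, true_and] at hjC
        simp only [hO, Finset.mem_filter, Finset.mem_univ, true_and] at hjO
        push_neg at hjO
        obtain ⟨k, hk⟩ := hjC
        by_cases hki : k = i
        · subst hki
          exact ⟨j, hk, fun k' hk' hs => hjO k' hk' hs⟩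
        · exact absurd hk (hjO k hki)
      -- build an injection ι → C
      choose g hg1 hg2 using key
      have hinj : Set.InjOn g ↑(Finset.univ : Finset ι) := by
        intro a _ b _ hab
        by_contra hne
        exact hg2 b a hne (hab ▸ hg1 a)
      have hmaps : ∀ a ∈ (Finset.univ : Finset ι), g a ∈ C := by
        intro a _
        simp only [hC, Finset.mem_filter, Finset.mem_univ, true_and]
        exact ⟨a, hg1 a⟩
      have : Fintype.card ι ≤ C.card := by
        rw [← Finset.card_univ]
        exact Finset.card_le_card_of_injOn g hmaps hinj
      exact le_trans (min_le_left _ _) this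
  refine ⟨main, ?_⟩
  rw [globalF, completedVal_eq, ← hC]
  have hcst : (min (Fintype.card ι : ℝ) (Fintype.card tasks : ℝ)) ≤ (C.card : ℝ) := by
    rw [← Nat.cast_min]; exact_mod_cast main
  have heq : min (Fintype.card ι : ℝ) (Fintype.card tasks : ℝ)
      / (Fintype.card tasks : ℝ) * ((Fintype.card tasks : ℝ) * v)
      = min (Fintype.card ι : ℝ) (Fintype.card tasks : ℝ) * v := by
    field_simp
    try ring
  rw [heq]
  exact mul_le_mul_of_nonneg_right hcst hv.le
end
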